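/- arXiv:2010.14424 — 9 statements merged into one kernel-verified Lean document; each statement's English description precedes it below -/
import Mathlib

section
/- Let L > 0, ε > 0, α, β ∈ (0,1), and let k : [0,L] → ℝ be continuous with k(x) ≥ k₀ for all x, for some constant k₀ > 0. If (ρ₁, J₁) and (ρ₂, J₂) are two classical solutions of the area-averaged pedestrian boundary value problem, then ρ₁(x) = ρ₂(x) for all x ∈ [0,L] and J₁ = J₂. -/
/-!
Both boundary conditions express the flux: `J = k(0) α (1 - ρ(0)) = k(L) β ρ(L)`. If `J₂ < J₁`,
then `ρ₁(0) < ρ₂(0)`, and wherever `ρ₁ = ρ₂` the equation gives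
`ρ₁' - ρ₂' = (J₂ - J₁) / (ε k) < 0`, so `ρ₁ - ρ₂` can never cross zero upwards and
`ρ₁(L) ≤ ρ₂(L)`, i.e. `J₁ ≤ J₂`, a contradiction. Once the fluxes agree, so do the densities
at `0`, and their difference solves the linear equation `w' = ε⁻¹ (1 - ρ₁ - ρ₂) w`, whence
`w = 0` by Grönwall.
-/

open Set

/-- A classical solution `(ρ, J)` (with derivative `ρ'`) of the area-averaged pedestrian
boundary value problem on `[0, L]` with diffusion `ε`, inflow rate `α`, outflow rate `β`
and width function `k`. -/
def IsClassicalSolution (L ε α β : ℝ) (k ρ ρ' : ℝ → ℝ) (J : ℝ) : Prop :=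
  (∀ x ∈ Icc (0:ℝ) L, HasDerivWithinAt ρ (ρ' x) (Icc 0 L) x) ∧
  ContinuousOn ρ' (Icc 0 L) ∧
  (∀ x ∈ Icc (0:ℝ) L, k x * (-ε * ρ' x + ρ x * (1 - ρ x)) = J) ∧
  -ε * ρ' 0 + ρ 0 * (1 - ρ 0) = α * (1 - ρ 0) ∧
  -ε * ρ' L + ρ L * (1 - ρ L) = β * ρ L

theorem eq_zero_of_hasDerivWithinAt_smul_self_of_eq_zero_right {E : Type*}
    [NormedAddCommGroup E] [NormedSpace ℝ E] {f : ℝ → E} {g : ℝ → ℝ} {a b : ℝ}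
    (hg : ContinuousOn g (Icc a b)) (hf : ContinuousOn f (Icc a b))
    (hf' : ∀ x ∈ Ico a b, HasDerivWithinAt f (g x • f x) (Ici x) x) (ha : f a = 0) :
    ∀ x ∈ Icc a b, f x = 0 := by
  obtain ⟨C, hC⟩ := isCompact_Icc.exists_bound_of_continuousOn hg
  refine eq_zero_of_abs_deriv_le_mul_abs_self_of_eq_zero_right (K := C) hf hf' ha fun x hx => ?_
  rw [norm_smul]
  exact mul_le_mul_of_nonneg_right (hC x (Ico_subset_Icc_self hx)) (norm_nonneg _)

namespace IsClassicalSolution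

variable {L ε α β : ℝ} {k ρ ρ' ρ₁ ρ₁' ρ₂ ρ₂' : ℝ → ℝ} {J J₁ J₂ : ℝ}

theorem continuousOn (h : IsClassicalSolution L ε α β k ρ ρ' J) : ContinuousOn ρ (Icc 0 L) :=
  fun x hx => (h.1 x hx).continuousWithinAt

theorem hasDerivWithinAt_Ici (h : IsClassicalSolution L ε α β k ρ ρ' J) {x : ℝ}
    (hx : x ∈ Ico 0 L) : HasDerivWithinAt ρ (ρ' x) (Ici x) x :=
  (h.1 x (Ico_subset_Icc_self hx)).mono_of_mem_nhdsWithin (Icc_mem_nhdsGE_of_mem hx)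

theorem deriv_eq (h : IsClassicalSolution L ε α β k ρ ρ' J) (hε : ε ≠ 0) {x : ℝ}
    (hx : x ∈ Icc 0 L) (hk : k x ≠ 0) : ρ' x = (ρ x * (1 - ρ x) - J / k x) / ε := by
  have := h.2.2.1 x hx
  field_simp
  linear_combination -this

theorem flux_eq_left (h : IsClassicalSolution L ε α β k ρ ρ' J) (hL : 0 ≤ L) :
    k 0 * (α * (1 - ρ 0)) = J := by
  rw [← h.2.2.1 0 ⟨le_rfl, hL⟩, h.2.2.2.1]

theorem flux_eq_right (h : IsClassicalSolution L ε α β k ρ ρ' J) (hL : 0 ≤ L) :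
    k L * (β * ρ L) = J := by
  rw [← h.2.2.1 L ⟨hL, le_rfl⟩, h.2.2.2.2]

theorem le_of_flux_lt (h₁ : IsClassicalSolution L ε α β k ρ₁ ρ₁' J₁)
    (h₂ : IsClassicalSolution L ε α β k ρ₂ ρ₂' J₂) (hε : 0 < ε)
    (hk : ∀ x ∈ Icc 0 L, 0 < k x) (hJ : J₂ < J₁) (h0 : ρ₁ 0 ≤ ρ₂ 0) :
    ∀ x ∈ Icc 0 L, ρ₁ x ≤ ρ₂ x := by
  have crossing : ∀ x ∈ Ico 0 L, ρ₁ x - ρ₂ x = 0 → ρ₁' x - ρ₂' x < 0 := by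
    intro x hx hx0
    have hxL := Ico_subset_Icc_self hx
    rw [h₁.deriv_eq hε.ne' hxL (hk x hxL).ne', h₂.deriv_eq hε.ne' hxL (hk x hxL).ne',
      sub_eq_zero.mp hx0, ← sub_div, sub_sub_sub_cancel_left]
    exact div_neg_of_neg_of_pos (sub_neg.mpr (div_lt_div_of_pos_right hJ (hk x hxL))) hε
  intro x hx
  exact sub_nonpos.mp <| image_le_of_deriv_right_lt_deriv_boundary
    (h₁.continuousOn.sub h₂.continuousOn)
    (fun y hy => (h₁.hasDerivWithinAt_Ici hy).sub (h₂.hasDerivWithinAt_Ici hy))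
    (B := fun _ => 0) (sub_nonpos.mpr h0) (fun _ => hasDerivAt_const _ _) crossing hx

theorem flux_le (h₁ : IsClassicalSolution L ε α β k ρ₁ ρ₁' J₁)
    (h₂ : IsClassicalSolution L ε α β k ρ₂ ρ₂' J₂) (hL : 0 ≤ L) (hε : 0 < ε) (hα : 0 < α)
    (hβ : 0 < β) (hk : ∀ x ∈ Icc 0 L, 0 < k x) : J₁ ≤ J₂ := by
  by_contra! hJ
  have hk0 := mul_pos (hk 0 ⟨le_rfl, hL⟩) hα
  have hkL := mul_pos (hk L ⟨hL, le_rfl⟩) hβ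
  have h0 : ρ₁ 0 ≤ ρ₂ 0 := by
    nlinarith [h₁.flux_eq_left hL, h₂.flux_eq_left hL]
  have hLL := le_of_flux_lt h₁ h₂ hε hk hJ h0 L ⟨hL, le_rfl⟩
  nlinarith [h₁.flux_eq_right hL, h₂.flux_eq_right hL]

theorem eqOn_of_flux_eq (h₁ : IsClassicalSolution L ε α β k ρ₁ ρ₁' J₁)
    (h₂ : IsClassicalSolution L ε α β k ρ₂ ρ₂' J₂) (hL : 0 ≤ L) (hε : ε ≠ 0) (hα : α ≠ 0)
    (hk : ∀ x ∈ Icc 0 L, k x ≠ 0) (hJ : J₁ = J₂) : ∀ x ∈ Icc 0 L, ρ₁ x = ρ₂ x := by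
  have h0 : ρ₁ 0 = ρ₂ 0 := by
    have := (h₁.flux_eq_left hL).trans (hJ.trans (h₂.flux_eq_left hL).symm)
    linarith [mul_left_cancel₀ hα (mul_left_cancel₀ (hk 0 ⟨le_rfl, hL⟩) this)]
  have linear : ∀ x ∈ Ico 0 L, ρ₁' x - ρ₂' x = (1 - ρ₁ x - ρ₂ x) / ε * (ρ₁ x - ρ₂ x) := by
    intro x hx
    have hxL := Ico_subset_Icc_self hx
    rw [h₁.deriv_eq hε hxL (hk x hxL), h₂.deriv_eq hε hxL (hk x hxL), hJ]
    ring
  intro x hx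
  refine sub_eq_zero.mp <| eq_zero_of_hasDerivWithinAt_smul_self_of_eq_zero_right
    (f := fun y => ρ₁ y - ρ₂ y) (g := fun y => (1 - ρ₁ y - ρ₂ y) / ε)
    (((continuousOn_const.sub h₁.continuousOn).sub h₂.continuousOn).div_const ε)
    (h₁.continuousOn.sub h₂.continuousOn) (fun y hy => ?_) (sub_eq_zero.mpr h0) x hx
  rw [smul_eq_mul, ← linear y hy]
  exact (h₁.hasDerivWithinAt_Ici hy).sub (h₂.hasDerivWithinAt_Ici hy)

end IsClassicalSolution

theorem uniqueness_classical_solution_general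
    (L ε α β k₀ : ℝ) (k : ℝ → ℝ)
    (hL : 0 < L) (hε : 0 < ε) (hα : α ∈ Ioo (0:ℝ) 1) (hβ : β ∈ Ioo (0:ℝ) 1)
    (hk₀ : 0 < k₀) (hk : ∀ x ∈ Icc (0:ℝ) L, k₀ ≤ k x)
    (ρ₁ ρ₁' ρ₂ ρ₂' : ℝ → ℝ) (J₁ J₂ : ℝ)
    (h₁ : IsClassicalSolution L ε α β k ρ₁ ρ₁' J₁)
    (h₂ : IsClassicalSolution L ε α β k ρ₂ ρ₂' J₂) :
    (∀ x ∈ Icc (0:ℝ) L, ρ₁ x = ρ₂ x) ∧ J₁ = J₂ := by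
  have hkpos : ∀ x ∈ Icc (0:ℝ) L, 0 < k x := fun x hx => hk₀.trans_le (hk x hx)
  have hJ : J₁ = J₂ := le_antisymm (h₁.flux_le h₂ hL.le hε hα.1 hβ.1 hkpos)
    (h₂.flux_le h₁ hL.le hε hα.1 hβ.1 hkpos)
  exact ⟨h₁.eqOn_of_flux_eq h₂ hL.le hε.ne' hα.1.ne' (fun x hx => (hkpos x hx).ne') hJ, hJ⟩

/-- Uniqueness of classical solutions. -/
theorem uniqueness_classical_solution
    (L ε α β k₀ : ℝ) (k : ℝ → ℝ)
    (hL : 0 < L) (hε : 0 < ε) (hα : α ∈ Ioo (0:ℝ) 1) (hβ : β ∈ Ioo (0:ℝ) 1)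
    (hk₀ : 0 < k₀) (hk : ∀ x ∈ Icc (0:ℝ) L, k₀ ≤ k x)
    (hkc : ContinuousOn k (Icc 0 L))
    (ρ₁ ρ₁' ρ₂ ρ₂' : ℝ → ℝ) (J₁ J₂ : ℝ)
    (h₁ : IsClassicalSolution L ε α β k ρ₁ ρ₁' J₁)
    (h₂ : IsClassicalSolution L ε α β k ρ₂ ρ₂' J₂) :
    (∀ x ∈ Icc (0:ℝ) L, ρ₁ x = ρ₂ x) ∧ J₁ = J₂ :=
  uniqueness_classical_solution_general L ε α β k₀ k hL hε hα hβ hk₀ hk ρ₁ ρ₁' ρ₂ ρ₂' J₁ J₂ h₁ h₂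
end

section
/- Let L > 0, ε > 0, α, β ∈ (0,1) and k : [0,L] → ℝ. If (ρ, J) is a classical solution of the area-averaged pedestrian boundary value problem with data (k, α, β), then the pair (ρ̃, J) with ρ̃(x) := 1 − ρ(L − x) is a classical solution of the area-averaged pedestrian boundary value problem with data (k̃, α̃, β̃), where k̃(x) := k(L − x), α̃ := β and β̃ := α. -/
open Set

/-!
Under `ρ̃(x) = 1 - ρ(L - x)` the two sign changes (of the values and of the variable) cancel,
so `ρ̃'(x) = ρ'(L - x)` and the diffusive part `-ε ρ'` of the flux is unchanged, while the
convective part `ρ(1 - ρ)` is invariant under `ρ ↦ 1 - ρ`. Hence `ρ̃` carries the same flux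
`J` through the reflected channel, and the inflow condition `α (1 - ρ)` at `0` becomes the
outflow condition `α ρ̃` at `L`, and vice versa.
-/

theorem mapsTo_const_sub_Icc_zero {G : Type*} [AddCommGroup G] [PartialOrder G]
    [IsOrderedAddMonoid G] (L : G) : MapsTo (L - ·) (Icc 0 L) (Icc 0 L) :=
  fun _ ⟨h0, hL⟩ => ⟨sub_nonneg.2 hL, sub_le_self L h0⟩

theorem HasDerivWithinAt.comp_const_sub {𝕜 F : Type*} [NontriviallyNormedField 𝕜]
    [NormedAddCommGroup F] [NormedSpace 𝕜 F] {f : 𝕜 → F} {f' : F} {s t : Set 𝕜} {a x : 𝕜}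
    (hf : HasDerivWithinAt f f' s (a - x)) (hst : MapsTo (a - ·) t s) :
    HasDerivWithinAt (fun x => f (a - x)) (-f') t x := by
  simpa [Function.comp_def] using hf.scomp x ((hasDerivWithinAt_id x t).const_sub a) hst

theorem one_sub_mul_one_sub_one_sub {R : Type*} [CommRing R] (r : R) :
    (1 - r) * (1 - (1 - r)) = r * (1 - r) := by
  ring

theorem symmetry_classical_solution_general
    (L ε α β : ℝ) (k ρ ρ' : ℝ → ℝ) (J : ℝ)
    (hsol : IsClassicalSolution L ε α β k ρ ρ' J) :
    IsClassicalSolution L ε β α (fun x => k (L - x))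
      (fun x => 1 - ρ (L - x)) (fun x => ρ' (L - x)) J := by
  obtain ⟨hderiv, hcont, hflux, hinflow, houtflow⟩ := hsol
  have hrefl := mapsTo_const_sub_Icc_zero L
  refine ⟨fun x hx => ?_, hcont.comp (by fun_prop) hrefl, fun x hx => ?_, ?_, ?_⟩
  · simpa using ((hderiv _ (hrefl hx)).comp_const_sub hrefl).const_sub 1
  · simpa only [one_sub_mul_one_sub_one_sub] using hflux _ (hrefl hx)
  · beta_reduce
    rw [sub_zero, one_sub_mul_one_sub_one_sub, sub_sub_cancel]
    exact houtflow
  · beta_reduce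
    rw [sub_self, one_sub_mul_one_sub_one_sub]
    exact hinflow

/-- Symmetry: if `(ρ, J)` solves the problem with data `(k, α, β)`, then
`ρ̃(x) = 1 - ρ(L - x)` solves it with data `(k̃, β, α)` where `k̃(x) = k(L - x)`. -/
theorem symmetry_classical_solution
    (L ε α β : ℝ) (k ρ ρ' : ℝ → ℝ) (J : ℝ)
    (hL : 0 < L) (hε : 0 < ε) (hα : α ∈ Ioo (0:ℝ) 1) (hβ : β ∈ Ioo (0:ℝ) 1)
    (hsol : IsClassicalSolution L ε α β k ρ ρ' J) :
    IsClassicalSolution L ε β α (fun x => k (L - x))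
      (fun x => 1 - ρ (L - x)) (fun x => ρ' (L - x)) J :=
  symmetry_classical_solution_general L ε α β k ρ ρ' J hsol
end

section
/- Let L > 0, ε > 0, let k : [0,L] → ℝ be continuously differentiable with k(x) > 0 for all x, let J ∈ ℝ, and let ρ : [0,L] → ℝ be twice continuously differentiable with 0 < ρ(x) < 1 for all x and k(x)·(−ε·ρ'(x) + ρ(x)·(1−ρ(x))) = J for every x ∈ [0,L]. If ρ attains a local minimum at a point x_m ∈ (0,L), then k'(x_m) ≥ 0; if ρ attains a local maximum at a point x_M ∈ (0,L), then k'(x_M) ≤ 0. -/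
/-!
Differentiating the constant flux at an interior critical point `x` of `ρ` gives
`k'(x) ρ(1 - ρ) = ε k ρ''(x)`. Since `ε k > 0` and `ρ(1 - ρ) > 0`, `k'(x)` has the sign of
`ρ''(x)`, which is `≥ 0` at a local minimum and `≤ 0` at a local maximum.
-/

open Set Filter Topology

theorem IsLocalMin.hasDerivAt_deriv_nonneg {f f' : ℝ → ℝ} {x c : ℝ} (hmin : IsLocalMin f x)
    (hf : ∀ᶠ y in 𝓝 x, HasDerivAt f (f' y) y) (hf' : HasDerivAt f' c x) : 0 ≤ c := by
  by_contra! hc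
  have hfx : HasDerivAt f (f' x) x := hf.self_of_nhds
  have hderiv : HasDerivAt (deriv f) c x :=
    hf'.congr_of_eventuallyEq (hf.mono fun y hy => hy.deriv)
  -- by the second-derivative test `x` is also a local maximum, so `f` is locally constant
  have hmax : IsLocalMax f x :=
    isLocalMax_of_deriv_deriv_neg (hderiv.deriv ▸ hc)
      (hfx.deriv.trans (hmin.hasDerivAt_eq_zero hfx)) hfx.continuousAt
  have hconst : f =ᶠ[𝓝 x] fun _ => f x :=
    (hmin.and hmax).mono fun y hy => le_antisymm hy.2 hy.1
  have hderiv_zero : HasDerivAt (deriv f) 0 x :=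
    (hasDerivAt_const x 0).congr_of_eventuallyEq (by simpa using hconst.deriv)
  exact hc.ne (hderiv.unique hderiv_zero)

theorem IsLocalMax.hasDerivAt_deriv_nonpos {f f' : ℝ → ℝ} {x c : ℝ} (hmax : IsLocalMax f x)
    (hf : ∀ᶠ y in 𝓝 x, HasDerivAt f (f' y) y) (hf' : HasDerivAt f' c x) : c ≤ 0 :=
  neg_nonneg.mp (hmax.neg.hasDerivAt_deriv_nonneg (hf.mono fun _ hy => hy.neg) hf'.neg)

theorem eventually_hasDerivAt_of_hasDerivWithinAt_Icc {f f' : ℝ → ℝ} {a b x : ℝ}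
    (hf : ∀ y ∈ Icc a b, HasDerivWithinAt f (f' y) (Icc a b) y) (hx : x ∈ Ioo a b) :
    ∀ᶠ y in 𝓝 x, HasDerivAt f (f' y) y := by
  filter_upwards [Ioo_mem_nhds hx.1 hx.2] with y hy
  exact (hf y (Ioo_subset_Icc_self hy)).hasDerivAt (Icc_mem_nhds hy.1 hy.2)

theorem width_deriv_mul_eq_of_constant_flux {k ρ ρ' : ℝ → ℝ} {ε J x a b : ℝ}
    (hk : HasDerivAt k a x) (hρ : HasDerivAt ρ (ρ' x) x) (hρ' : HasDerivAt ρ' b x)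
    (hflux : ∀ᶠ y in 𝓝 x, k y * (-ε * ρ' y + ρ y * (1 - ρ y)) = J) (hcrit : ρ' x = 0) :
    a * (ρ x * (1 - ρ x)) = ε * k x * b := by
  have hderiv : HasDerivAt (fun y => k y * (-ε * ρ' y + ρ y * (1 - ρ y)))
      (a * (-ε * ρ' x + ρ x * (1 - ρ x)) +
        k x * (-ε * b + (ρ' x * (1 - ρ x) + ρ x * (0 - ρ' x)))) x :=
    hk.mul ((hρ'.const_mul (-ε)).add (hρ.mul ((hasDerivAt_const x 1).sub hρ)))
  have hderiv_eq_zero := hderiv.unique ((hasDerivAt_const x J).congr_of_eventuallyEq hflux)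
  rw [hcrit] at hderiv_eq_zero
  linarith

theorem maximum_principle_general
    (L ε J : ℝ) (k k' ρ ρ' ρ'' : ℝ → ℝ)
    (hε : 0 < ε)
    (hk : ∀ x ∈ Icc (0:ℝ) L, HasDerivWithinAt k (k' x) (Icc 0 L) x)
    (hkpos : ∀ x ∈ Icc (0:ℝ) L, 0 < k x)
    (hρ : ∀ x ∈ Icc (0:ℝ) L, HasDerivWithinAt ρ (ρ' x) (Icc 0 L) x)
    (hρ' : ∀ x ∈ Icc (0:ℝ) L, HasDerivWithinAt ρ' (ρ'' x) (Icc 0 L) x)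
    (hbound : ∀ x ∈ Icc (0:ℝ) L, 0 < ρ x ∧ ρ x < 1)
    (heq : ∀ x ∈ Icc (0:ℝ) L, k x * (-ε * ρ' x + ρ x * (1 - ρ x)) = J) :
    (∀ xm ∈ Ioo (0:ℝ) L, IsLocalMin ρ xm → 0 ≤ k' xm) ∧
    (∀ xM ∈ Ioo (0:ℝ) L, IsLocalMax ρ xM → k' xM ≤ 0) := by
  have hρ_near x (hx : x ∈ Ioo 0 L) := eventually_hasDerivAt_of_hasDerivWithinAt_Icc hρ hx
  have hρ'_at x (hx : x ∈ Ioo 0 L) :=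
    (eventually_hasDerivAt_of_hasDerivWithinAt_Icc hρ' hx).self_of_nhds
  have hflux x (hx : x ∈ Ioo 0 L) (hcrit : ρ' x = 0) :
      k' x * (ρ x * (1 - ρ x)) = ε * k x * ρ'' x :=
    width_deriv_mul_eq_of_constant_flux
      (eventually_hasDerivAt_of_hasDerivWithinAt_Icc hk hx).self_of_nhds
      (hρ_near x hx).self_of_nhds (hρ'_at x hx)
      (eventually_of_mem (Icc_mem_nhds hx.1 hx.2) heq) hcrit
  have hlogistic x (hx : x ∈ Ioo 0 L) : 0 < ρ x * (1 - ρ x) := by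
    obtain ⟨h0, h1⟩ := hbound x (Ioo_subset_Icc_self hx)
    exact mul_pos h0 (sub_pos.mpr h1)
  have hεk x (hx : x ∈ Ioo 0 L) : 0 < ε * k x := mul_pos hε (hkpos x (Ioo_subset_Icc_self hx))
  refine ⟨fun x hx hmin => ?_, fun x hx hmax => ?_⟩
  · have hcrit := hmin.hasDerivAt_eq_zero (hρ_near x hx).self_of_nhds
    have hρ'' := hmin.hasDerivAt_deriv_nonneg (hρ_near x hx) (hρ'_at x hx)
    exact nonneg_of_mul_nonneg_left (hflux x hx hcrit ▸ mul_nonneg (hεk x hx).le hρ'')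
      (hlogistic x hx)
  · have hcrit := hmax.hasDerivAt_eq_zero (hρ_near x hx).self_of_nhds
    have hρ'' := hmax.hasDerivAt_deriv_nonpos (hρ_near x hx) (hρ'_at x hx)
    exact nonpos_of_mul_nonpos_left
      (hflux x hx hcrit ▸ mul_nonpos_of_nonneg_of_nonpos (hεk x hx).le hρ'') (hlogistic x hx)

/-- Maximum principle: for a `C²` solution of the constant-flux equation
`k(x)·(−ε·ρ'(x) + ρ(x)·(1−ρ(x))) = J` with `0 < ρ < 1` and `k ∈ C¹`, `k > 0`,
if `ρ` attains a local minimum at an interior point `x` then `k'(x) ≥ 0`, and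
if `ρ` attains a local maximum at an interior point `x` then `k'(x) ≤ 0`. -/
theorem maximum_principle
    (L ε J : ℝ) (k k' ρ ρ' ρ'' : ℝ → ℝ)
    (hL : 0 < L) (hε : 0 < ε)
    (hk : ∀ x ∈ Icc (0:ℝ) L, HasDerivWithinAt k (k' x) (Icc 0 L) x)
    (hk'c : ContinuousOn k' (Icc 0 L))
    (hkpos : ∀ x ∈ Icc (0:ℝ) L, 0 < k x)
    (hρ : ∀ x ∈ Icc (0:ℝ) L, HasDerivWithinAt ρ (ρ' x) (Icc 0 L) x)
    (hρ' : ∀ x ∈ Icc (0:ℝ) L, HasDerivWithinAt ρ' (ρ'' x) (Icc 0 L) x)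
    (hρ''c : ContinuousOn ρ'' (Icc 0 L))
    (hbound : ∀ x ∈ Icc (0:ℝ) L, 0 < ρ x ∧ ρ x < 1)
    (heq : ∀ x ∈ Icc (0:ℝ) L, k x * (-ε * ρ' x + ρ x * (1 - ρ x)) = J) :
    (∀ xm ∈ Ioo (0:ℝ) L, IsLocalMin ρ xm → 0 ≤ k' xm) ∧
    (∀ xM ∈ Ioo (0:ℝ) L, IsLocalMax ρ xM → k' xM ≤ 0) :=
  maximum_principle_general L ε J k k' ρ ρ' ρ'' hε hk hkpos hρ hρ' hbound heq
end

section
/- Assume ρ_f < α < 1 with α ≠ 1 − ρ_f, and 1/2 < β < 1. Suppose that for every ε > 0, (ρ_ε, J_ε) is a classical solution of the area-averaged pedestrian boundary value problem on [0,1] with diffusion ε. Then, as ε → 0⁺, J_ε → k(1)/4, ρ_ε(0) → 1 − k(1)/(4α·k(0)), and ρ_ε(1) → 1/(4β). -/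
/-!
Write `g = J / k`, so that `ε ρ' = ρ (1 - ρ) - g` on `[0, 1]` with `g` nondecreasing. If
`J ≥ b > k(1)/4`, then `ε ρ' ≤ 1/4 - g` is uniformly negative near `x = 1`, so `ρ` would drop
by order `1/ε` over a fixed interval, which is impossible since `ρ ≤ 1` and `ρ(1) > 0`.

If `J < k(1)/4`, the level `1/2` cannot be reached: above it `ρ` keeps increasing up to `x = 1`,
and then `J = β k(1) ρ(1) ≥ k(1)/4` since `β ≥ 1/2`. So `ρ < 1/2`, and for `α ≥ 1/2` the inflow
condition `J = α k(0) (1 - ρ(0))` already forces `J > k(0)/4 ≥ k(1)/4`. For `α < 1/2`, a slope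
`ε ρ'(0) ≥ θ` would persist near `x = 0` and again make `ρ` grow by order `1/ε`; hence
`(1 - ρ(0)) (ρ(0) - α) = ε ρ'(0) < θ`, so `ρ(0) < α + 2θ` and `J > α (1 - α - 2θ) k(0)`.
Since `ρ_f < α < 1/2` means exactly `4 α (1 - α) k(0) > k(1)`, this exceeds `k(1)/4` for
small `θ`.

The boundary limits then follow from the two boundary conditions.
-/

open Set Filter

/-- `ρ_f = (1/2)·(1 − √(1 − k(1)/k(0)))`. -/
noncomputable def rhoF (k : ℝ → ℝ) : ℝ := (1/2) * (1 - Real.sqrt (1 - k 1 / k 0))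

/-- `ρ*(α) = (1/2)·(1 − √(1 − 4α(1−α)·k(0)/k(1)))`. -/
noncomputable def rhoStar (α : ℝ) (k : ℝ → ℝ) : ℝ :=
  (1/2) * (1 - Real.sqrt (1 - 4*α*(1-α) * k 0 / k 1))

/-- `ρ_*(β) = (1/2)·(1 + √(1 − 4β(1−β)·k(1)/k(0)))`. -/
noncomputable def rhoStarLow (β : ℝ) (k : ℝ → ℝ) : ℝ :=
  (1/2) * (1 + Real.sqrt (1 - 4*β*(1-β) * k 1 / k 0))

open Topology

section Calculus

variable {f f' : ℝ → ℝ} {a b c : ℝ}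

theorem image_le_const_of_deriv_neg_of_eq
    (hf : ∀ x ∈ Icc a b, HasDerivWithinAt f (f' x) (Icc a b) x) (ha : f a ≤ c)
    (hc : ∀ x ∈ Ico a b, f x = c → f' x < 0) : ∀ x ∈ Icc a b, f x ≤ c :=
  fun _ hx => image_le_of_deriv_right_lt_deriv_boundary' (B := fun _ => c) (B' := 0)
    (fun x hx => (hf x hx).continuousWithinAt)
    (fun x hx =>
      (hf x (Ico_subset_Icc_self hx)).mono_of_mem_nhdsWithin (Icc_mem_nhdsGE_of_mem hx))
    ha continuousOn_const (fun _ _ => hasDerivWithinAt_const _ _ _) hc hx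

theorem const_le_image_of_deriv_pos_of_eq
    (hf : ∀ x ∈ Icc a b, HasDerivWithinAt f (f' x) (Icc a b) x) (ha : c ≤ f a)
    (hc : ∀ x ∈ Ico a b, f x = c → 0 < f' x) : ∀ x ∈ Icc a b, c ≤ f x := by
  intro x hx
  have := image_le_const_of_deriv_neg_of_eq (f := -f) (fun x hx => (hf x hx).neg)
    (neg_le_neg ha) (fun x hx hfx => neg_neg_of_pos (hc x hx (neg_inj.1 hfx))) x hx
  exact neg_le_neg_iff.1 this

theorem mul_sub_le_image_sub_of_le_deriv_Icc (hab : a ≤ b)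
    (hf : ∀ x ∈ Icc a b, HasDerivWithinAt f (f' x) (Icc a b) x) (hc : ∀ x ∈ Ico a b, c ≤ f' x) :
    c * (b - a) ≤ f b - f a := by
  have := image_le_of_deriv_right_le_deriv_boundary (f := fun x => f a + c * (x - a))
    (f' := fun _ => c) (B := f) (B' := f') (a := a) (b := b) (by fun_prop)
    (fun x _ => (((hasDerivWithinAt_id x _).sub_const a).const_mul c).const_add (f a)
      |>.congr_deriv (by simp))
    (by simp) (fun x hx => (hf x hx).continuousWithinAt)
    (fun x hx =>
      (hf x (Ico_subset_Icc_self hx)).mono_of_mem_nhdsWithin (Icc_mem_nhdsGE_of_mem hx))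
    hc ⟨hab, le_rfl⟩
  linarith

end Calculus

namespace IsClassicalSolution

variable {ε α β : ℝ} {k ρ ρ' : ℝ → ℝ} {J : ℝ}

theorem inflow (h : IsClassicalSolution 1 ε α β k ρ ρ' J) : J = α * k 0 * (1 - ρ 0) := by
  rw [← h.2.2.1 0 (by simp), h.2.2.2.1]; ring

theorem outflow (h : IsClassicalSolution 1 ε α β k ρ ρ' J) : J = β * k 1 * ρ 1 := by
  rw [← h.2.2.1 1 (by simp), h.2.2.2.2]; ring

theorem eps_mul_deriv (h : IsClassicalSolution 1 ε α β k ρ ρ' J)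
    (hk : ∀ x ∈ Icc (0:ℝ) 1, 0 < k x) {x : ℝ} (hx : x ∈ Icc (0:ℝ) 1) :
    ε * ρ' x = ρ x * (1 - ρ x) - J / k x := by
  rw [← h.2.2.1 x hx, mul_div_cancel_left₀ _ (hk x hx).ne']; ring

theorem rho_zero_eq (h : IsClassicalSolution 1 ε α β k ρ ρ' J) (hα : α ≠ 0)
    (hk : ∀ x ∈ Icc (0:ℝ) 1, 0 < k x) : ρ 0 = 1 - J / (α * k 0) := by
  rw [h.inflow, mul_div_cancel_left₀ _ (mul_ne_zero hα (hk 0 (by simp)).ne')]; ring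

theorem rho_one_eq (h : IsClassicalSolution 1 ε α β k ρ ρ' J) (hβ : β ≠ 0)
    (hk : ∀ x ∈ Icc (0:ℝ) 1, 0 < k x) : ρ 1 = J / (β * k 1) := by
  rw [h.outflow, mul_div_cancel_left₀ _ (mul_ne_zero hβ (hk 1 (by simp)).ne')]

theorem hasDerivWithinAt_Icc (h : IsClassicalSolution 1 ε α β k ρ ρ' J) {a b : ℝ}
    (hab : Icc a b ⊆ Icc 0 1) : ∀ x ∈ Icc a b, HasDerivWithinAt ρ (ρ' x) (Icc a b) x :=
  fun x hx => (h.1 x (hab hx)).mono hab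

theorem half_le_rho_one (h : IsClassicalSolution 1 ε α β k ρ ρ' J) (hε : 0 < ε)
    (hk : ∀ x ∈ Icc (0:ℝ) 1, 0 < k x) (hJ : ∀ x ∈ Icc (0:ℝ) 1, J / k x < 1 / 4)
    {x₀ : ℝ} (hx₀ : x₀ ∈ Icc (0:ℝ) 1) (hρ : 1 / 2 ≤ ρ x₀) : 1 / 2 ≤ ρ 1 := by
  have hsub : Icc x₀ 1 ⊆ Icc 0 1 := Icc_subset_Icc_left hx₀.1
  refine const_le_image_of_deriv_pos_of_eq (h.hasDerivWithinAt_Icc hsub) hρ ?_ 1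
    ⟨hx₀.2, le_rfl⟩
  intro x hx hρx
  have hx' := hsub (Ico_subset_Icc_self hx)
  have := h.eps_mul_deriv hk hx'
  rw [hρx] at this
  exact (mul_pos_iff_of_pos_left hε).1 (by linarith [hJ x hx'])

theorem flux_pos (h : IsClassicalSolution 1 ε α β k ρ ρ' J) (hε : 0 < ε) (hα : 0 < α)
    (hβ : 0 < β) (hk : ∀ x ∈ Icc (0:ℝ) 1, 0 < k x) : 0 < J := by
  have hk0 := hk 0 (by simp)
  have hk1 := hk 1 (by simp)
  by_contra! hJ
  have hρ0 : 1 / 2 ≤ ρ 0 := by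
    rw [h.rho_zero_eq hα.ne' hk]
    linarith [div_nonpos_of_nonpos_of_nonneg hJ (mul_pos hα hk0).le]
  have hρ1 := h.half_le_rho_one hε hk
    (fun x hx => (div_nonpos_of_nonpos_of_nonneg hJ (hk x hx).le).trans_lt (by norm_num))
    (by simp) hρ0
  have : 0 < β * k 1 * ρ 1 := mul_pos (mul_pos hβ hk1) (by linarith)
  linarith [h.outflow]

theorem rho_le_one (h : IsClassicalSolution 1 ε α β k ρ ρ' J) (hε : 0 < ε) (hα : 0 < α)
    (hβ : 0 < β) (hk : ∀ x ∈ Icc (0:ℝ) 1, 0 < k x) : ∀ x ∈ Icc (0:ℝ) 1, ρ x ≤ 1 := by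
  have hJ := h.flux_pos hε hα hβ hk
  have hρ0 : ρ 0 ≤ 1 := by
    rw [h.rho_zero_eq hα.ne' hk]
    linarith [div_pos hJ (mul_pos hα (hk 0 (by simp)))]
  refine image_le_const_of_deriv_neg_of_eq (h.hasDerivWithinAt_Icc subset_rfl) hρ0 ?_
  intro x hx hρx
  have hx' := Ico_subset_Icc_self hx
  have := h.eps_mul_deriv hk hx'
  rw [hρx] at this
  exact neg_of_mul_neg_right (by linarith [div_pos hJ (hk x hx')]) hε.le

theorem sub_quarter_mul_lt_eps (h : IsClassicalSolution 1 ε α β k ρ ρ' J) (hε : 0 < ε)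
    (hα : 0 < α) (hβ : 0 < β) (hk : ∀ x ∈ Icc (0:ℝ) 1, 0 < k x) {l b : ℝ}
    (hl : l ∈ Ioc (0:ℝ) 1) (hb : ∀ x ∈ Icc (1 - l) 1, b ≤ J / k x) : (b - 1 / 4) * l < ε := by
  have hsub : Icc (1 - l) 1 ⊆ Icc 0 1 := Icc_subset_Icc_left (by linarith [hl.2])
  have hrate : ∀ x ∈ Ico (1 - l) 1, b - 1 / 4 ≤ -(ε * ρ' x) := by
    intro x hx
    have := h.eps_mul_deriv hk (hsub (Ico_subset_Icc_self hx))
    linarith [hb x (Ico_subset_Icc_self hx), sq_nonneg (ρ x - 1 / 2)]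
  have hdrop := mul_sub_le_image_sub_of_le_deriv_Icc (f := fun y => -(ε * ρ y))
    (by linarith [hl.1]) (fun x hx => ((h.hasDerivWithinAt_Icc hsub x hx).const_mul ε).neg)
    hrate
  have hρl := h.rho_le_one hε hα hβ hk (1 - l) (hsub ⟨le_rfl, by linarith [hl.1]⟩)
  have hρ1 : 0 < ρ 1 := by
    rw [h.rho_one_eq hβ.ne' hk]
    exact div_pos (h.flux_pos hε hα hβ hk) (mul_pos hβ (hk 1 (by simp)))
  have : ε * (ρ (1 - l) - ρ 1) < ε := by nlinarith
  linarith

theorem rho_lt_half (h : IsClassicalSolution 1 ε α β k ρ ρ' J) (hε : 0 < ε) (hβ : 1 / 2 ≤ β)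
    (hk : ∀ x ∈ Icc (0:ℝ) 1, 0 < k x) (hanti : AntitoneOn k (Icc 0 1)) (hJ₀ : 0 ≤ J)
    (hJ : J < k 1 / 4) : ∀ x ∈ Icc (0:ℝ) 1, ρ x < 1 / 2 := by
  have hk1 := hk 1 (by simp)
  have hg : ∀ y ∈ Icc (0:ℝ) 1, J / k y < 1 / 4 := fun y hy =>
    calc J / k y ≤ J / k 1 := div_le_div_of_nonneg_left hJ₀ hk1 (hanti hy (by simp) hy.2)
      _ < 1 / 4 := by rw [div_lt_iff₀ hk1]; linarith
  intro x hx
  by_contra! hρ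
  have hρ1 := h.half_le_rho_one hε hk hg hx hρ
  have hβρ : 1 / 4 ≤ β * ρ 1 := by nlinarith
  nlinarith [mul_le_mul_of_nonneg_left hβρ hk1.le, h.outflow]

theorem rho_mul_sub_flux_div_lt (h : IsClassicalSolution 1 ε α β k ρ ρ' J) (hε : 0 < ε)
    (hk : ∀ x ∈ Icc (0:ℝ) 1, 0 < k x) (hJ : 0 ≤ J) {l θ : ℝ} (hl : l ∈ Ioc (0:ℝ) 1)
    (hρ : ∀ x ∈ Icc 0 l, ρ x ≤ 1 / 2) (hg : ∀ x ∈ Icc 0 l, J / k x ≤ J / k 0 + θ / 2)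
    (hεθ : ε ≤ θ * l) : ρ 0 * (1 - ρ 0) - J / k 0 < θ := by
  have hsub : Icc 0 l ⊆ Icc 0 1 := Icc_subset_Icc_right hl.2
  have h0 : (0:ℝ) ∈ Icc 0 l := ⟨le_rfl, hl.1.le⟩
  by_contra! hθ
  have hθpos : 0 < θ := pos_of_mul_pos_left (hε.trans_le hεθ) hl.1.le
  have hJk0 : 0 ≤ J / k 0 := div_nonneg hJ (hk 0 (by simp)).le
  have hge : ∀ x ∈ Icc 0 l, ρ 0 ≤ ρ x := by
    refine const_le_image_of_deriv_pos_of_eq (h.hasDerivWithinAt_Icc hsub) le_rfl ?_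
    intro x hx hρx
    have := h.eps_mul_deriv hk (hsub (Ico_subset_Icc_self hx))
    rw [hρx] at this
    exact pos_of_mul_pos_right (by linarith [hg x (Ico_subset_Icc_self hx)]) hε.le
  have hrate : ∀ x ∈ Ico 0 l, θ / 2 ≤ ε * ρ' x := by
    intro x hx
    have hx' := Ico_subset_Icc_self hx
    have := h.eps_mul_deriv hk (hsub hx')
    have hρsum : 0 ≤ 1 - ρ x - ρ 0 := by linarith [hρ x hx', hρ 0 h0]
    nlinarith [hg x hx', mul_nonneg (sub_nonneg.2 (hge x hx')) hρsum]
  have hrise := mul_sub_le_image_sub_of_le_deriv_Icc hl.1.le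
    (fun x hx => (h.hasDerivWithinAt_Icc hsub x hx).const_mul ε) hrate
  have hρ0 : 0 < ρ 0 := by nlinarith [hρ 0 h0]
  have : ε * (ρ l - ρ 0) < ε / 2 := by nlinarith [hρ l ⟨hl.1.le, le_rfl⟩]
  nlinarith

theorem quarter_le_flux_of_half_le (h : IsClassicalSolution 1 ε α β k ρ ρ' J) (hε : 0 < ε)
    (hα : 1 / 2 ≤ α) (hβ : 1 / 2 ≤ β) (hk : ∀ x ∈ Icc (0:ℝ) 1, 0 < k x)
    (hanti : AntitoneOn k (Icc 0 1)) : k 1 / 4 ≤ J := by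
  by_contra! hJ
  have hJ₀ := h.flux_pos hε (by linarith) (by linarith) hk
  have hρ0 := h.rho_lt_half hε hβ hk hanti hJ₀.le hJ 0 (by simp)
  have hk10 : k 1 ≤ k 0 := hanti (by simp) (by simp) zero_le_one
  have hk0 := hk 0 (by simp)
  have hαρ : 1 / 4 < α * (1 - ρ 0) := by nlinarith
  have := h.inflow
  nlinarith [mul_lt_mul_of_pos_left hαρ hk0]

theorem quarter_le_flux_of_eps_le (h : IsClassicalSolution 1 ε α β k ρ ρ' J) (hε : 0 < ε)
    (hα : 0 < α) (hβ : 1 / 2 ≤ β) (hk : ∀ x ∈ Icc (0:ℝ) 1, 0 < k x)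
    (hanti : AntitoneOn k (Icc 0 1)) {l θ : ℝ} (hl : l ∈ Ioc (0:ℝ) 1)
    (hkl : ∀ x ∈ Icc 0 l, (k x)⁻¹ ≤ (k 0)⁻¹ + 2 * θ / k 1) (hεθ : ε ≤ θ * l)
    (hθ : k 1 / 4 ≤ α * (1 - α - 2 * θ) * k 0) : k 1 / 4 ≤ J := by
  by_contra! hJ
  have hJ₀ := h.flux_pos hε hα (by linarith) hk
  have hρ := h.rho_lt_half hε hβ hk hanti hJ₀.le hJ
  have hθpos : 0 < θ := pos_of_mul_pos_left (hε.trans_le hεθ) hl.1.le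
  have hk1 := hk 1 (by simp)
  have hg : ∀ x ∈ Icc 0 l, J / k x ≤ J / k 0 + θ / 2 := by
    intro x hx
    have : J * (2 * θ / k 1) ≤ θ / 2 := by
      rw [mul_div_assoc', div_le_iff₀ hk1]; nlinarith
    calc J / k x = J * (k x)⁻¹ := div_eq_mul_inv _ _
      _ ≤ J * ((k 0)⁻¹ + 2 * θ / k 1) := by gcongr; exact hkl x hx
      _ ≤ J / k 0 + θ / 2 := by rw [mul_add, ← div_eq_mul_inv]; linarith
  have hslope := h.rho_mul_sub_flux_div_lt hε hk hJ₀.le hl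
    (fun x hx => (hρ x (Icc_subset_Icc_right hl.2 hx)).le) hg hεθ
  have hk0 := hk 0 (by simp)
  rw [h.inflow, mul_right_comm, mul_div_cancel_right₀ _ hk0.ne'] at hslope
  have hρ0 := hρ 0 (by simp)
  have hρα : ρ 0 < α + 2 * θ := by nlinarith
  nlinarith [h.inflow]

end IsClassicalSolution

theorem ContinuousWithinAt.exists_Ioc_forall_abs_sub_le_lt {f : ℝ → ℝ} {s : Set ℝ} {p c : ℝ}
    (hf : ContinuousWithinAt f s p) (hc : f p < c) :
    ∃ l ∈ Ioc (0:ℝ) 1, ∀ x ∈ s, |x - p| ≤ l → f x < c := by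
  obtain ⟨δ, hδ, hδf⟩ := Metric.continuousWithinAt_iff.1 hf (c - f p) (sub_pos.2 hc)
  refine ⟨min (δ / 2) 1, ⟨by positivity, min_le_right _ _⟩, fun x hx hxp => ?_⟩
  have := hδf hx (by rw [Real.dist_eq]; linarith [min_le_left (δ / 2) 1])
  rw [Real.dist_eq] at this
  linarith [le_abs_self (f x - f p)]

section VanishingViscosity

variable {α β : ℝ} {k : ℝ → ℝ} {ρ ρ' : ℝ → ℝ → ℝ} {J : ℝ → ℝ}

theorem eventually_flux_lt
    (hsol : ∀ ε > 0, IsClassicalSolution 1 ε α β k (ρ ε) (ρ' ε) (J ε)) (hα : 0 < α)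
    (hβ : 0 < β) (hk : ∀ x ∈ Icc (0:ℝ) 1, 0 < k x) (hkc : ContinuousWithinAt k (Icc 0 1) 1)
    {b : ℝ} (hb : k 1 / 4 < b) : ∀ᶠ ε in 𝓝[>] 0, J ε < b := by
  have hk1 := hk 1 (by simp)
  obtain ⟨b₁, hb₁, hb₁b⟩ := exists_between hb
  have hb₁ : 0 < b₁ := by linarith
  obtain ⟨l, hl, hkl⟩ := hkc.exists_Ioc_forall_abs_sub_le_lt (c := k 1 * b / b₁)
    (by rw [lt_div_iff₀ hb₁]; nlinarith)
  have hε₀ : 0 < (b₁ / k 1 - 1 / 4) * l := by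
    have : 1 / 4 < b₁ / k 1 := by rw [lt_div_iff₀ hk1]; linarith
    nlinarith [hl.1]
  filter_upwards [Ioo_mem_nhdsGT hε₀] with ε ⟨hε, hεl⟩
  by_contra! hJ
  refine (hεl.trans ((hsol ε hε).sub_quarter_mul_lt_eps hε hα hβ hk hl fun x hx => ?_)).false
  have hx' : x ∈ Icc (0:ℝ) 1 := ⟨by linarith [hx.1, hl.2], hx.2⟩
  have hkx := hk x hx'
  have := hkl x hx' (by rw [abs_sub_comm, abs_of_nonneg (by linarith [hx.2])]; linarith [hx.1])
  rw [div_le_div_iff₀ hk1 hkx]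
  rw [lt_div_iff₀ hb₁] at this
  nlinarith

theorem eventually_quarter_le_flux
    (hsol : ∀ ε > 0, IsClassicalSolution 1 ε α β k (ρ ε) (ρ' ε) (J ε)) (hα : 0 < α)
    (hβ : 1 / 2 ≤ β) (hk : ∀ x ∈ Icc (0:ℝ) 1, 0 < k x) (hanti : AntitoneOn k (Icc 0 1))
    (hkc : ContinuousWithinAt k (Icc 0 1) 0)
    (hαk : 1 / 2 ≤ α ∨ k 1 < 4 * α * (1 - α) * k 0) : ∀ᶠ ε in 𝓝[>] 0, k 1 / 4 ≤ J ε := by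
  rcases hαk with hα₂ | hαk
  · filter_upwards [self_mem_nhdsWithin] with ε hε
    exact (hsol ε hε).quarter_le_flux_of_half_le hε hα₂ hβ hk hanti
  have hk0 := hk 0 (by simp)
  have hk1 := hk 1 (by simp)
  set θ := (4 * α * (1 - α) * k 0 - k 1) / (8 * α * k 0) with hθdef
  have hθ : 0 < θ := div_pos (by linarith) (by positivity)
  have hθα : k 1 / 4 = α * (1 - α - 2 * θ) * k 0 := by
    rw [hθdef]; field_simp; ring
  obtain ⟨l, hl, hkl⟩ := (hkc.inv₀ hk0.ne').exists_Ioc_forall_abs_sub_le_lt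
    (c := (k 0)⁻¹ + 2 * θ / k 1)
    (by rw [Pi.inv_apply]; linarith [div_pos (mul_pos two_pos hθ) hk1])
  filter_upwards [Ioo_mem_nhdsGT (mul_pos hθ hl.1)] with ε ⟨hε, hεl⟩
  refine (hsol ε hε).quarter_le_flux_of_eps_le hε hα hβ hk hanti hl (fun x hx => ?_) hεl.le
    hθα.le
  refine (hkl x (Icc_subset_Icc_right hl.2 hx) ?_).le
  rw [sub_zero, abs_of_nonneg hx.1]
  exact hx.2

theorem tendsto_flux
    (hsol : ∀ ε > 0, IsClassicalSolution 1 ε α β k (ρ ε) (ρ' ε) (J ε)) (hα : 0 < α)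
    (hβ : 1 / 2 ≤ β) (hk : ∀ x ∈ Icc (0:ℝ) 1, 0 < k x) (hanti : AntitoneOn k (Icc 0 1))
    (hkc : ContinuousOn k (Icc 0 1)) (hαk : 1 / 2 ≤ α ∨ k 1 < 4 * α * (1 - α) * k 0) :
    Tendsto J (𝓝[>] 0) (𝓝 (k 1 / 4)) :=
  tendsto_order.2
    ⟨fun _ ha => (eventually_quarter_le_flux hsol hα hβ hk hanti (hkc 0 (by simp)) hαk).mono
      fun _ hJ => ha.trans_le hJ,
    fun _ hb => eventually_flux_lt hsol hα (by linarith) hk (hkc 1 (by simp)) hb⟩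

end VanishingViscosity

section CriticalInflow

variable {k : ℝ → ℝ}

theorem rhoF_nonneg (hk0 : 0 < k 0) (hk1 : 0 ≤ k 1) : 0 ≤ rhoF k := by
  have : Real.sqrt (1 - k 1 / k 0) ≤ 1 :=
    Real.sqrt_le_one.2 (by linarith [div_nonneg hk1 hk0.le])
  unfold rhoF
  linarith

theorem rhoF_le_half : rhoF k ≤ 1 / 2 := by
  unfold rhoF
  linarith [Real.sqrt_nonneg (1 - k 1 / k 0)]

theorem rhoF_mul_one_sub (hk0 : 0 < k 0) (hk10 : k 1 ≤ k 0) :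
    rhoF k * (1 - rhoF k) = k 1 / (4 * k 0) := by
  have hs := Real.sq_sqrt (sub_nonneg.2 ((div_le_one hk0).2 hk10))
  unfold rhoF
  linear_combination (-1 / 4) * hs

theorem half_le_or_lt_of_rhoF_lt {α : ℝ} (hk0 : 0 < k 0) (hk10 : k 1 ≤ k 0)
    (hα : rhoF k < α) : 1 / 2 ≤ α ∨ k 1 < 4 * α * (1 - α) * k 0 := by
  refine or_iff_not_imp_left.2 fun hα₂ => ?_
  have hroot := rhoF_mul_one_sub hk0 hk10
  rw [eq_div_iff (by positivity)] at hroot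
  have : 0 < (α - rhoF k) * (1 - α - rhoF k) :=
    mul_pos (by linarith) (by linarith [rhoF_le_half (k := k)])
  nlinarith

end CriticalInflow

theorem vanishing_viscosity_region34_boundary_general
    (α β : ℝ) (k k' : ℝ → ℝ) (ρ ρ' : ℝ → ℝ → ℝ) (J : ℝ → ℝ)
    (hk : ∀ x ∈ Icc (0:ℝ) 1, HasDerivWithinAt k (k' x) (Icc 0 1) x)
    (hkpos : ∀ x ∈ Icc (0:ℝ) 1, 0 < k x)
    (hk'neg : ∀ x ∈ Icc (0:ℝ) 1, k' x < 0)
    (hα0 : rhoF k < α)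
    (hβ1 : 1/2 < β)
    (hsol : ∀ ε > 0, IsClassicalSolution 1 ε α β k (ρ ε) (ρ' ε) (J ε)) :
    Tendsto J (nhdsWithin 0 (Ioi 0)) (nhds (k 1 / 4)) ∧
    Tendsto (fun ε => ρ ε 0) (nhdsWithin 0 (Ioi 0))
      (nhds (1 - k 1 / (4 * α * k 0))) ∧
    Tendsto (fun ε => ρ ε 1) (nhdsWithin 0 (Ioi 0)) (nhds (1 / (4 * β))) := by
  have hkc : ContinuousOn k (Icc 0 1) := fun x hx => (hk x hx).continuousWithinAt
  have hanti : AntitoneOn k (Icc 0 1) :=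
    antitoneOn_of_hasDerivWithinAt_nonpos (convex_Icc 0 1) hkc
      (fun x hx => (hk x (interior_subset hx)).mono interior_subset)
      (fun x hx => (hk'neg x (interior_subset hx)).le)
  have hk0 := hkpos 0 (by simp)
  have hk1 := hkpos 1 (by simp)
  have hk10 : k 1 ≤ k 0 := hanti (by simp) (by simp) zero_le_one
  have hα : 0 < α := (rhoF_nonneg hk0 hk1.le).trans_lt hα0
  have hJ := tendsto_flux hsol hα hβ1.le hkpos hanti hkc
    (half_le_or_lt_of_rhoF_lt hk0 hk10 hα0)
  refine ⟨hJ, ?_, ?_⟩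
  · have h0 := (tendsto_const_nhds.sub (hJ.div_const (α * k 0))).congr'
      (eventually_nhdsWithin_of_forall fun ε hε => ((hsol ε hε).rho_zero_eq hα.ne' hkpos).symm)
    rwa [div_div, ← mul_assoc] at h0
  · have h1 := (hJ.div_const (β * k 1)).congr'
      (eventually_nhdsWithin_of_forall fun ε hε =>
        ((hsol ε hε).rho_one_eq (by linarith) hkpos).symm)
    have hlim : k 1 / 4 / (β * k 1) = 1 / (4 * β) := by field_simp
    rwa [hlim] at h1

/-- Vanishing-viscosity limits of the flux and the boundary values in region G₃ ∪ G₄. -/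
theorem vanishing_viscosity_region34_boundary
    (α β : ℝ) (k k' : ℝ → ℝ) (ρ ρ' : ℝ → ℝ → ℝ) (J : ℝ → ℝ)
    (hk : ∀ x ∈ Icc (0:ℝ) 1, HasDerivWithinAt k (k' x) (Icc 0 1) x)
    (hk'c : ContinuousOn k' (Icc 0 1))
    (hkpos : ∀ x ∈ Icc (0:ℝ) 1, 0 < k x)
    (hk'neg : ∀ x ∈ Icc (0:ℝ) 1, k' x < 0)
    (hα0 : rhoF k < α) (hα1 : α < 1) (hαne : α ≠ 1 - rhoF k)
    (hβ1 : 1/2 < β) (hβ2 : β < 1)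
    (hsol : ∀ ε > 0, IsClassicalSolution 1 ε α β k (ρ ε) (ρ' ε) (J ε)) :
    Tendsto J (nhdsWithin 0 (Ioi 0)) (nhds (k 1 / 4)) ∧
    Tendsto (fun ε => ρ ε 0) (nhdsWithin 0 (Ioi 0))
      (nhds (1 - k 1 / (4 * α * k 0))) ∧
    Tendsto (fun ε => ρ ε 1) (nhdsWithin 0 (Ioi 0)) (nhds (1 / (4 * β))) :=
  vanishing_viscosity_region34_boundary_general α β k k' ρ ρ' J hk hkpos hk'neg hα0 hβ1 hsol
end

section
/- Let 0 < k₁ ≤ k₀ be real numbers and let α, β ∈ (0, 1/2] satisfy 4α(1−α)·k₀ ≤ k₁. Then α = 1 − (1/2)·(1 + √(1 − 4β(1−β)·k₁/k₀)) if and only if β = (1/2)·(1 − √(1 − 4α(1−α)·k₀/k₁)). -/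
/-!
On `x ≤ 1/2` the map `x ↦ 4x(1 − x)` is injective, with inverse `c ↦ (1 − √(1 − c))/2` on `c ≤ 1`,
and `1 − (1 + s)/2 = (1 − s)/2`. Hence both equations say `4α(1 − α)·k₀ = 4β(1 − β)·k₁`.
-/

open Set

lemma four_mul_mul_one_sub_le_one (x : ℝ) : 4 * x * (1 - x) ≤ 1 := by
  nlinarith [sq_nonneg (1 - 2 * x)]

lemma eq_half_mul_one_sub_sqrt_one_sub_iff {x c : ℝ} (hx : x ≤ 1/2) (hc : c ≤ 1) :
    x = (1/2) * (1 - Real.sqrt (1 - c)) ↔ c = 4 * x * (1 - x) := by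
  constructor
  · intro h
    have hsqrt : Real.sqrt (1 - c) = 1 - 2 * x := by linarith
    have hsq := Real.sq_sqrt (sub_nonneg.2 hc)
    rw [hsqrt] at hsq
    linarith
  · intro h
    have hsq : 1 - c = (1 - 2 * x) ^ 2 := by rw [h]; ring
    rw [hsq, Real.sqrt_sq (by linarith)]
    ring

lemma one_sub_half_mul_one_add (s : ℝ) : 1 - (1/2) * (1 + s) = (1/2) * (1 - s) := by ring

/-- The boundary curves `α = 1 − ρ_*(β)` and `β = ρ*(α)` coincide:
`α = 1 − (1/2)·(1 + √(1 − 4β(1−β)·k₁/k₀))` iff `β = (1/2)·(1 − √(1 − 4α(1−α)·k₀/k₁))`. -/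
theorem boundary_curves_coincide
    (k₀ k₁ α β : ℝ) (hk₁ : 0 < k₁) (hk : k₁ ≤ k₀)
    (hα : α ∈ Ioc (0:ℝ) (1/2)) (hβ : β ∈ Ioc (0:ℝ) (1/2))
    (hle : 4*α*(1-α) * k₀ ≤ k₁) :
    α = 1 - (1/2) * (1 + Real.sqrt (1 - 4*β*(1-β) * k₁ / k₀)) ↔
      β = (1/2) * (1 - Real.sqrt (1 - 4*α*(1-α) * k₀ / k₁)) := by
  have hk₀ : 0 < k₀ := hk₁.trans_le hk
  have hc₁ : 4*β*(1-β) * k₁ / k₀ ≤ 1 := by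
    rw [div_le_one hk₀]
    calc 4*β*(1-β) * k₁ ≤ 1 * k₁ :=
          mul_le_mul_of_nonneg_right (four_mul_mul_one_sub_le_one β) hk₁.le
      _ ≤ k₀ := by rwa [one_mul]
  have hc₂ : 4*α*(1-α) * k₀ / k₁ ≤ 1 := (div_le_one hk₁).2 hle
  rw [one_sub_half_mul_one_add, eq_half_mul_one_sub_sqrt_one_sub_iff hα.2 hc₁,
    eq_half_mul_one_sub_sqrt_one_sub_iff hβ.2 hc₂, div_eq_iff hk₀.ne', div_eq_iff hk₁.ne']
  exact ⟨fun h => by linarith, fun h => by linarith⟩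
end

section
/- Fix j ∈ (0, 1/4) and set ρ₋ = (1/2)·(1 − √(1 − 4j)) and ρ₊ = (1/2)·(1 + √(1 − 4j)). If v : [0,∞) → ℝ is differentiable and satisfies v'(t) = v(t)·(1 − v(t)) − j for all t ≥ 0 and v(0) > ρ₋, then v(t) → ρ₊ as t → ∞. -/
open Set Filter Topology Real

/-!
Writing `a < b` for the two equilibria, the equation reads `v' = -(v - a)(v - b)`, and the cross
ratio `w = (v - b)/(v - a)` solves the linear equation `w' = -(b - a) w`. So
`v - b = E t * (v - a)` with `E t = w(0) e^{-(b - a) t}`; in this cleared form the defect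
`g = (v - b) - E (v - a)` satisfies `g' = (a - v) g` and `g 0 = 0`, hence vanishes by Grönwall,
and no a priori knowledge that `v` avoids `a` is needed. Solving for `v` gives
`v = (b - a E) / (1 - E) → b` since `E → 0`.
-/

theorem eq_zero_of_hasDerivWithinAt_smul_self {E : Type*} [NormedAddCommGroup E]
    [NormedSpace ℝ E] {g : ℝ → E} {p : ℝ → ℝ} {t₀ : ℝ} (hp : ContinuousOn p (Ici t₀))
    (hg : ∀ t ∈ Ici t₀, HasDerivWithinAt g (p t • g t) (Ici t₀) t) (h₀ : g t₀ = 0) :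
    ∀ t ∈ Ici t₀, g t = 0 := by
  intro T hT
  obtain ⟨K, hK⟩ := isCompact_Icc.exists_bound_of_continuousOn (hp.mono Icc_subset_Ici_self)
  refine eq_zero_of_abs_deriv_le_mul_abs_self_of_eq_zero_right (K := K)
    (fun t ht => (hg t ht.1).continuousWithinAt.mono Icc_subset_Ici_self)
    (fun t ht => (hg t ht.1).mono (Ici_subset_Ici.2 ht.1)) h₀ (fun t ht => ?_) T ⟨hT, le_rfl⟩
  rw [norm_smul]
  exact mul_le_mul_of_nonneg_right (hK t (Ico_subset_Icc_self ht)) (norm_nonneg _)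

section Riccati

variable {a b : ℝ} {v v' : ℝ → ℝ}

theorem sub_eq_exp_mul_sub_of_riccati
    (hv : ∀ t, 0 ≤ t → HasDerivWithinAt v (v' t) (Ici 0) t)
    (heq : ∀ t, 0 ≤ t → v' t = -((v t - a) * (v t - b))) (ha : v 0 ≠ a) (t : ℝ) (ht : 0 ≤ t) :
    v t - b = (v 0 - b) / (v 0 - a) * exp (-(b - a) * t) * (v t - a) := by
  set w := (v 0 - b) / (v 0 - a)
  set g : ℝ → ℝ := fun t => (v t - b) - w * exp (-(b - a) * t) * (v t - a)
  have hg : ∀ t ∈ Ici (0 : ℝ), HasDerivWithinAt g ((a - v t) • g t) (Ici 0) t := by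
    intro t ht
    have hE : HasDerivAt (fun t => w * exp (-(b - a) * t))
        (w * (exp (-(b - a) * t) * (-(b - a)))) t :=
      (((hasDerivAt_id t).const_mul (-(b - a))).exp.congr_deriv (by simp)).const_mul w
    refine (((hv t ht).sub_const b).sub
      (hE.hasDerivWithinAt.mul ((hv t ht).sub_const a))).congr_deriv ?_
    rw [heq t ht, smul_eq_mul]
    ring
  have hg₀ : g 0 = 0 := by
    simp only [g, w, mul_zero, exp_zero, mul_one]
    rw [div_mul_cancel₀ _ (sub_ne_zero.2 ha), sub_self]
  have hp : ContinuousOn (fun t => a - v t) (Ici 0) :=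
    continuousOn_const.sub fun t ht => (hv t ht).continuousWithinAt
  exact sub_eq_zero.1 (eq_zero_of_hasDerivWithinAt_smul_self hp hg hg₀ t ht)

theorem tendsto_of_riccati
    (hv : ∀ t, 0 ≤ t → HasDerivWithinAt v (v' t) (Ici 0) t)
    (heq : ∀ t, 0 ≤ t → v' t = -((v t - a) * (v t - b))) (ha : v 0 ≠ a) (hab : a < b) :
    Tendsto v atTop (𝓝 b) := by
  set E : ℝ → ℝ := fun t => (v 0 - b) / (v 0 - a) * exp (-(b - a) * t)
  have hE : Tendsto E atTop (𝓝 0) := by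
    have := (tendsto_exp_atBot.comp
      (tendsto_id.const_mul_atTop_of_neg (by linarith : -(b - a) < 0))).const_mul
      ((v 0 - b) / (v 0 - a))
    rwa [mul_zero] at this
  have hformula : ∀ᶠ t in atTop, (b - a * E t) / (1 - E t) = v t := by
    filter_upwards [eventually_ge_atTop 0, hE.eventually (eventually_lt_nhds one_pos)]
      with t ht hE1
    rw [div_eq_iff (sub_ne_zero.2 hE1.ne')]
    linear_combination -(sub_eq_exp_mul_sub_of_riccati hv heq ha t ht)
  have hlim : Tendsto (fun t => (b - a * E t) / (1 - E t)) atTop (𝓝 ((b - a * 0) / (1 - 0))) :=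
    ((tendsto_const_nhds.sub (hE.const_mul a)).div (tendsto_const_nhds.sub hE)
      (by norm_num))
  rw [mul_zero, sub_zero, sub_zero, div_one] at hlim
  exact hlim.congr' hformula

end Riccati

/-- For the layer problem `v' = v(1−v) − j` with `0 < j < 1/4`, every solution starting
above the repelling equilibrium `ρ₋ = (1/2)(1 − √(1−4j))` converges to the attracting
equilibrium `ρ₊ = (1/2)(1 + √(1−4j))` as `t → ∞`. -/
theorem layer_problem_convergence
    (j : ℝ) (hj : j ∈ Ioo (0:ℝ) (1/4)) (v v' : ℝ → ℝ)
    (hv : ∀ t, 0 ≤ t → HasDerivWithinAt v (v' t) (Ici 0) t)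
    (heq : ∀ t, 0 ≤ t → v' t = v t * (1 - v t) - j)
    (h0 : (1/2) * (1 - Real.sqrt (1 - 4*j)) < v 0) :
    Tendsto v atTop (nhds ((1/2) * (1 + Real.sqrt (1 - 4*j)))) := by
  have hdisc : 0 < 1 - 4 * j := by linarith [hj.2]
  have hroot : 0 < √(1 - 4 * j) := sqrt_pos.2 hdisc
  have hfactor : ∀ x : ℝ, x * (1 - x) - j
      = -((x - (1/2) * (1 - √(1 - 4*j))) * (x - (1/2) * (1 + √(1 - 4*j)))) := fun x => by
    linear_combination (-1/4 : ℝ) * sq_sqrt hdisc.le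
  exact tendsto_of_riccati hv (fun t ht => (heq t ht).trans (hfactor _)) h0.ne' (by linarith)
end

section
/- Let a < b be real numbers, ε > 0, J > 1/4, and set c = √(J − 1/4). If ρ : [a,b] → ℝ is differentiable and satisfies ε·ρ'(x) = ρ(x)·(1 − ρ(x)) − J for all x ∈ [a,b], then there exists ξ ∈ ℝ such that c·(x − ξ)/ε ∈ (−π/2, π/2) and ρ(x) = 1/2 − c·tan(c·(x − ξ)/ε) for every x ∈ [a,b]. -/
/-!
With `c = √(J - 1/4)` the right-hand side is `-(c² + (ρ - 1/2)²)`, so `u = (1/2 - ρ)/c` solves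
`ε u' = c (1 + u²)`: `arctan u` has constant slope `c / ε` on `[a, b]`. Hence
`arctan u = c (x - ξ) / ε` for a suitable `ξ`, which lies in `(-π/2, π/2)`, and taking `tan`
recovers `ρ`.
-/

open Set

theorem eq_add_mul_sub_of_hasDerivWithinAt_Icc {f : ℝ → ℝ} {k a b : ℝ}
    (hf : ∀ x ∈ Icc a b, HasDerivWithinAt f k (Icc a b) x) :
    ∀ x ∈ Icc a b, f x = f a + k * (x - a) := by
  have hline (x : ℝ) : HasDerivAt (fun y => f a + k * (y - a)) k x := by
    simpa using ((hasDerivAt_id x).sub_const a).const_mul k |>.const_add (f a)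
  refine eq_of_has_deriv_right_eq (fun x hx => ?_) (fun x _ => (hline x).hasDerivWithinAt)
    (HasDerivWithinAt.continuousOn hf) (fun x _ => (hline x).continuousAt.continuousWithinAt)
    (by simp)
  exact (hf x (Ico_subset_Icc_self hx)).mono_of_mem_nhdsWithin (Icc_mem_nhdsGE_of_mem hx)

theorem hasDerivWithinAt_arctan_of_riccati {ρ : ℝ → ℝ} {ρ' c ε x : ℝ} {s : Set ℝ}
    (hc : c ≠ 0) (hε : ε ≠ 0) (hρ : HasDerivWithinAt ρ ρ' s x)
    (heq : ε * ρ' = ρ x * (1 - ρ x) - (c ^ 2 + 1 / 4)) :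
    HasDerivWithinAt (fun y => Real.arctan ((1 / 2 - ρ y) / c)) (c / ε) s x := by
  have harctan := (Real.hasDerivAt_arctan _).comp_hasDerivWithinAt x
    ((hρ.const_sub (1 / 2)).div_const c)
  refine harctan.congr_deriv ?_
  have hρ' : ρ' = (ρ x * (1 - ρ x) - (c ^ 2 + 1 / 4)) / ε := by
    rw [eq_div_iff hε]; linarith
  rw [hρ']
  field_simp
  ring

theorem tan_profile_general
    (a b ε J : ℝ) (hε : 0 < ε) (hJ : 1/4 < J)
    (ρ ρ' : ℝ → ℝ)
    (hρ : ∀ x ∈ Icc a b, HasDerivWithinAt ρ (ρ' x) (Icc a b) x)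
    (heq : ∀ x ∈ Icc a b, ε * ρ' x = ρ x * (1 - ρ x) - J) :
    ∃ ξ : ℝ, ∀ x ∈ Icc a b,
      Real.sqrt (J - 1/4) * (x - ξ) / ε ∈ Ioo (-(Real.pi/2)) (Real.pi/2) ∧
      ρ x = 1/2 - Real.sqrt (J - 1/4) *
        Real.tan (Real.sqrt (J - 1/4) * (x - ξ) / ε) := by
  set c := Real.sqrt (J - 1/4)
  have hc : 0 < c := Real.sqrt_pos.mpr (by linarith)
  have hJc : J = c ^ 2 + 1 / 4 := by rw [Real.sq_sqrt (by linarith)]; ring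
  set θ : ℝ → ℝ := fun y => Real.arctan ((1 / 2 - ρ y) / c)
  have hθ : ∀ x ∈ Icc a b, θ x = θ a + c / ε * (x - a) :=
    eq_add_mul_sub_of_hasDerivWithinAt_Icc fun x hx =>
      hasDerivWithinAt_arctan_of_riccati hc.ne' hε.ne' (hρ x hx) (hJc ▸ heq x hx)
  refine ⟨a - ε * θ a / c, fun x hx => ?_⟩
  have hphase : c * (x - (a - ε * θ a / c)) / ε = θ x := by
    rw [hθ x hx]; field_simp; ring
  rw [hphase]
  refine ⟨⟨Real.neg_pi_div_two_lt_arctan _, Real.arctan_lt_pi_div_two _⟩, ?_⟩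
  simp only [θ, Real.tan_arctan]
  field_simp
  ring

/-- For flux `J > 1/4`, every solution of `ε·ρ' = ρ(1−ρ) − J` on `[a,b]` is a tangent
profile: `ρ(x) = 1/2 − c·tan(c·(x−ξ)/ε)` with `c = √(J − 1/4)` for some shift `ξ`. -/
theorem tan_profile
    (a b ε J : ℝ) (hab : a < b) (hε : 0 < ε) (hJ : 1/4 < J)
    (ρ ρ' : ℝ → ℝ)
    (hρ : ∀ x ∈ Icc a b, HasDerivWithinAt ρ (ρ' x) (Icc a b) x)
    (heq : ∀ x ∈ Icc a b, ε * ρ' x = ρ x * (1 - ρ x) - J) :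
    ∃ ξ : ℝ, ∀ x ∈ Icc a b,
      Real.sqrt (J - 1/4) * (x - ξ) / ε ∈ Ioo (-(Real.pi/2)) (Real.pi/2) ∧
      ρ x = 1/2 - Real.sqrt (J - 1/4) *
        Real.tan (Real.sqrt (J - 1/4) * (x - ξ) / ε) :=
  tan_profile_general a b ε J hε hJ ρ ρ' hρ heq
end

section
/- Let a < b be real numbers, ε > 0, 0 ≤ J < 1/4, and set c = √(1/4 − J). If ρ : [a,b] → ℝ is differentiable and satisfies ε·ρ'(x) = ρ(x)·(1 − ρ(x)) − J for all x ∈ [a,b], and moreover 1/2 − c < ρ(x) < 1/2 + c for all x ∈ [a,b], then there exists ξ ∈ ℝ such that ρ(x) = 1/2 + c·tanh(c·(x − ξ)/ε) for every x ∈ [a,b]. -/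
/-!
Normalising `v = (ρ - 1/2) / c` turns the equation into `v' = (c/ε) (1 - v²)` with `|v| < 1`.
Since `artanh' = 1 / (1 - v²)`, the function `artanh ∘ v` has the constant derivative `c/ε`,
so it is affine and `v` is the hyperbolic tangent of an affine function.
-/

open Set

namespace Real

theorem hasDerivAt_artanh {x : ℝ} (hx : x ∈ Ioo (-1) 1) :
    HasDerivAt artanh (1 - x ^ 2)⁻¹ x := by
  have h_log_sub : ∀ y ∈ Ioo (-1 : ℝ) 1, artanh y = (log (1 + y) - log (1 - y)) / 2 :=
    fun y hy => by
      rw [artanh_eq_half_log (Ioo_subset_Icc_self hy),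
        log_div (by linarith [hy.1]) (by linarith [hy.2])]
      ring
  have hplus : 1 + x ≠ 0 := by linarith [hx.1]
  have hminus : 1 - x ≠ 0 := by linarith [hx.2]
  have hsq : 1 - x ^ 2 ≠ 0 := by nlinarith [hx.1, hx.2]
  have hderiv := ((((hasDerivAt_id x).const_add 1).log hplus).sub
    (((hasDerivAt_id x).const_sub 1).log hminus)).div_const 2
  refine (hderiv.congr_of_eventuallyEq
    (Filter.eventually_of_mem (Ioo_mem_nhds hx.1 hx.2) h_log_sub)).congr_deriv ?_
  simp only [id]
  field_simp
  ring

end Real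

theorem eq_add_mul_sub_of_hasDerivWithinAt {f : ℝ → ℝ} {a b k : ℝ}
    (hf : ∀ x ∈ Icc a b, HasDerivWithinAt f k (Icc a b) x) :
    ∀ x ∈ Icc a b, f x = f a + k * (x - a) := by
  have hg : ∀ x ∈ Icc a b, HasDerivWithinAt (fun y => f y - k * y) 0 (Icc a b) x :=
    fun x hx => ((hf x hx).sub ((hasDerivWithinAt_id x _).const_mul k)).congr_deriv (by ring)
  intro x hx
  have hconst := constant_of_has_deriv_right_zero (fun y hy => (hg y hy).continuousWithinAt)
    (fun y hy => (hg y (Ico_subset_Icc_self hy)).mono_of_mem_nhdsWithin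
      (Icc_mem_nhdsGE_of_mem hy)) x hx
  linear_combination hconst

theorem exists_eq_tanh_of_deriv_eq_mul_one_sub_sq {v v' : ℝ → ℝ} {a b k : ℝ}
    (hv : ∀ x ∈ Icc a b, HasDerivWithinAt v (v' x) (Icc a b) x)
    (hv' : ∀ x ∈ Icc a b, v' x = k * (1 - v x ^ 2))
    (hv_mem : ∀ x ∈ Icc a b, v x ∈ Ioo (-1) 1) :
    ∃ η : ℝ, ∀ x ∈ Icc a b, v x = Real.tanh (k * x + η) := by
  have hartanh : ∀ x ∈ Icc a b,
      HasDerivWithinAt (fun y => Real.artanh (v y)) k (Icc a b) x := by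
    intro x hx
    have hsq : 1 - v x ^ 2 ≠ 0 := by nlinarith [(hv_mem x hx).1, (hv_mem x hx).2]
    refine ((Real.hasDerivAt_artanh (hv_mem x hx)).comp_hasDerivWithinAt x
      (hv x hx)).congr_deriv ?_
    rw [hv' x hx]
    field_simp
  refine ⟨Real.artanh (v a) - k * a, fun x hx => ?_⟩
  rw [← Real.tanh_artanh (hv_mem x hx), eq_add_mul_sub_of_hasDerivWithinAt hartanh x hx]
  congr 1
  ring

theorem tanh_profile_general
    (a b ε J : ℝ) (hε : 0 < ε) (hJ : J < 1/4)
    (ρ ρ' : ℝ → ℝ)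
    (hρ : ∀ x ∈ Icc a b, HasDerivWithinAt ρ (ρ' x) (Icc a b) x)
    (heq : ∀ x ∈ Icc a b, ε * ρ' x = ρ x * (1 - ρ x) - J)
    (hbound : ∀ x ∈ Icc a b,
      1/2 - Real.sqrt (1/4 - J) < ρ x ∧ ρ x < 1/2 + Real.sqrt (1/4 - J)) :
    ∃ ξ : ℝ, ∀ x ∈ Icc a b,
      ρ x = 1/2 + Real.sqrt (1/4 - J) *
        Real.tanh (Real.sqrt (1/4 - J) * (x - ξ) / ε) := by
  set c := Real.sqrt (1/4 - J)
  have hc : 0 < c := Real.sqrt_pos.mpr (by linarith)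
  have hc_sq : c ^ 2 = 1/4 - J := Real.sq_sqrt (by linarith)
  set v : ℝ → ℝ := fun x => (ρ x - 1/2) / c with hv
  have hv_deriv : ∀ x ∈ Icc a b, HasDerivWithinAt v (ρ' x / c) (Icc a b) x :=
    fun x hx => ((hρ x hx).sub_const _).div_const c
  have hv_ode : ∀ x ∈ Icc a b, ρ' x / c = c / ε * (1 - v x ^ 2) := fun x hx => by
    rw [hv]
    field_simp
    linear_combination 4 * heq x hx - 4 * hc_sq
  have hv_mem : ∀ x ∈ Icc a b, v x ∈ Ioo (-1) 1 := fun x hx => by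
    obtain ⟨hlow, hup⟩ := hbound x hx
    constructor
    · rw [lt_div_iff₀ hc]; linarith
    · rw [div_lt_iff₀ hc]; linarith
  obtain ⟨η, hη⟩ := exists_eq_tanh_of_deriv_eq_mul_one_sub_sq hv_deriv hv_ode hv_mem
  refine ⟨-ε * η / c, fun x hx => ?_⟩
  have harg : c * (x - -ε * η / c) / ε = c / ε * x + η := by
    field_simp
    ring
  rw [harg, ← hη x hx, hv]
  field_simp
  ring

/-- For flux `0 ≤ J < 1/4`, every solution of `ε·ρ' = ρ(1−ρ) − J` on `[a,b]` taking values
strictly between the two equilibria `1/2 ± c`, `c = √(1/4 − J)`, is a hyperbolic tangent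
profile: `ρ(x) = 1/2 + c·tanh(c·(x−ξ)/ε)` for some shift `ξ`. -/
theorem tanh_profile
    (a b ε J : ℝ) (hab : a < b) (hε : 0 < ε) (hJ0 : 0 ≤ J) (hJ : J < 1/4)
    (ρ ρ' : ℝ → ℝ)
    (hρ : ∀ x ∈ Icc a b, HasDerivWithinAt ρ (ρ' x) (Icc a b) x)
    (heq : ∀ x ∈ Icc a b, ε * ρ' x = ρ x * (1 - ρ x) - J)
    (hbound : ∀ x ∈ Icc a b,
      1/2 - Real.sqrt (1/4 - J) < ρ x ∧ ρ x < 1/2 + Real.sqrt (1/4 - J)) :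
    ∃ ξ : ℝ, ∀ x ∈ Icc a b,
      ρ x = 1/2 + Real.sqrt (1/4 - J) *
        Real.tanh (Real.sqrt (1/4 - J) * (x - ξ) / ε) :=
  tanh_profile_general a b ε J hε hJ ρ ρ' hρ heq hbound
end

section
/- Let L > 0, ε > 0 and J ∈ ℝ. If there exists a differentiable function ρ : [0,L] → ℝ satisfying ε·ρ'(x) = ρ(x)·(1 − ρ(x)) − J for all x ∈ [0,L], then J < 1/4 + (π·ε/L)². -/
open Set Real

/-!
Write `J = 1/4 + a²` with `a > 0` (otherwise there is nothing to prove) and `u = ρ - 1/2`, so that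
`ε u' = -(u² + a²)`. Then `arctan (u / a) + a x / ε` is constant, and since `arctan` takes values
in an interval of length `π`, a solution can exist on `[0, L]` only if `a L / ε < π`.
-/

theorem arctan_sub_arctan_lt_pi (x y : ℝ) : arctan x - arctan y < π := by
  linarith [arctan_lt_pi_div_two x, neg_pi_div_two_lt_arctan y]

theorem hasDerivWithinAt_arctan_div_add_of_riccati {f : ℝ → ℝ} {f' a ε x : ℝ} {s : Set ℝ}
    (hf : HasDerivWithinAt f f' s x) (ha : a ≠ 0) (hε : ε ≠ 0)
    (hode : ε * f' = -(f x ^ 2 + a ^ 2)) :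
    HasDerivWithinAt (fun y => arctan (f y / a) + a / ε * y) 0 s x := by
  have hlin : HasDerivWithinAt (fun y => a / ε * y) (a / ε) s x := by
    simpa using ((hasDerivAt_id x).const_mul (a / ε)).hasDerivWithinAt
  refine ((hf.div_const a).arctan.add hlin).congr_deriv ?_
  have hf' : f' = -(f x ^ 2 + a ^ 2) / ε := by field_simp; linarith
  rw [hf']
  field_simp
  ring

theorem riccati_mul_length_lt {u u' : ℝ → ℝ} {a ε L : ℝ} (ha : 0 < a) (hε : 0 < ε) (hL : 0 ≤ L)
    (hu : ∀ x ∈ Icc 0 L, HasDerivWithinAt u (u' x) (Icc 0 L) x)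
    (hode : ∀ x ∈ Icc 0 L, ε * u' x = -(u x ^ 2 + a ^ 2)) :
    a * L < π * ε := by
  set ψ : ℝ → ℝ := fun y => arctan (u y / a) + a / ε * y
  have hψ' : ∀ x ∈ Icc 0 L, HasDerivWithinAt ψ 0 (Icc 0 L) x := fun x hx =>
    hasDerivWithinAt_arctan_div_add_of_riccati (hu x hx) ha.ne' hε.ne' (hode x hx)
  have hψ : ψ L = ψ 0 := by
    have := (convex_Icc 0 L).norm_image_sub_le_of_norm_hasDerivWithin_le hψ'
      (fun _ _ => norm_zero.le) (left_mem_Icc.2 hL) (right_mem_Icc.2 hL)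
    rwa [zero_mul, norm_le_zero_iff, sub_eq_zero] at this
  have hlt : a / ε * L < π := by
    have := arctan_sub_arctan_lt_pi (u 0 / a) (u L / a)
    simp only [ψ, mul_zero, add_zero] at hψ
    linarith
  rwa [div_mul_eq_mul_div, div_lt_iff₀ hε] at hlt

/-- Maximal admissible flux in a straight corridor of length `L`: if `ε·ρ' = ρ(1−ρ) − J`
has a solution on `[0,L]`, then `J < 1/4 + (π·ε/L)²`. -/
theorem maximal_flux_straight_corridor
    (L ε J : ℝ) (hL : 0 < L) (hε : 0 < ε)
    (h : ∃ (ρ ρ' : ℝ → ℝ),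
      (∀ x ∈ Icc (0:ℝ) L, HasDerivWithinAt ρ (ρ' x) (Icc 0 L) x) ∧
      (∀ x ∈ Icc (0:ℝ) L, ε * ρ' x = ρ x * (1 - ρ x) - J)) :
    J < 1/4 + (Real.pi * ε / L)^2 := by
  obtain ⟨ρ, ρ', hρ, hode⟩ := h
  rcases le_or_gt J (1 / 4) with hJ | hJ
  · have : 0 < (π * ε / L) ^ 2 := by positivity
    linarith
  set a := √(J - 1 / 4)
  have ha : 0 < a := sqrt_pos.2 (by linarith)
  have ha2 : a ^ 2 = J - 1 / 4 := sq_sqrt (by linarith)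
  have hlen : a * L < π * ε := by
    refine riccati_mul_length_lt (u := fun x => ρ x - 1 / 2) ha hε hL.le
      (fun x hx => (hρ x hx).sub_const _) fun x hx => ?_
    linear_combination hode x hx + ha2
  have hlt : a < π * ε / L := (lt_div_iff₀ hL).2 hlen
  linarith [pow_lt_pow_left₀ hlt ha.le two_ne_zero]
end
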